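/- Let γ>0 and ν∈ℝ, and define f:ℝ→ℝ by f(h) = −|h+ν| + γ when |h+ν| ≥ 2γ and f(h) = −(h+ν)²/(4γ) when |h+ν| ≤ 2γ (equivalently, f(h) = min_{t∈[−1,1]} ((h+ν)t + γt²)). Then for h a standard normal random variable, E[f(h)] = I22(γ,ν) − I1(γ,ν) + I21(γ,ν), where I22(γ,ν) = (1/2)(ν+γ)·erfc((ν+2γ)/√2) − e^{−(ν+2γ)²/2}/√(2π), I1(γ,ν) = [ √(π/2)(ν²+1)·erf((2γ−ν)/√2) + √(π/2)(ν²+1)·erf((2γ+ν)/√2) + e^{−(ν+2γ)²/2}(ν−2γ) − e^{−(ν−2γ)²/2}(ν+2γ) ] / (4√(2π)γ), and I21(γ,ν) = −(1/2)(ν−γ)(erf((ν−2γ)/√2)+1) − e^{−(ν−2γ)²/2}/√(2π). -/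

import Mathlib

open MeasureTheory ProbabilityTheory Filter Real

/-- The error function `erf(x) = (2/√π) ∫₀ˣ e^{-t²} dt`. -/
noncomputable def erf (x : ℝ) : ℝ := (2 / Real.sqrt π) * ∫ t in (0:ℝ)..x, Real.exp (-t^2)

/-- The complementary error function. -/
noncomputable def erfc (x : ℝ) : ℝ := 1 - erf x

noncomputable def I22 (γ ν : ℝ) : ℝ :=
  (1/2) * (ν + γ) * erfc ((ν + 2*γ) / Real.sqrt 2)
    - Real.exp (-(ν + 2*γ)^2 / 2) / Real.sqrt (2*π)

noncomputable def I1 (γ ν : ℝ) : ℝ :=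
  (Real.sqrt (π/2) * (ν^2 + 1) * erf ((2*γ - ν) / Real.sqrt 2)
    + Real.sqrt (π/2) * (ν^2 + 1) * erf ((2*γ + ν) / Real.sqrt 2)
    + Real.exp (-(ν + 2*γ)^2 / 2) * (ν - 2*γ)
    - Real.exp (-(ν - 2*γ)^2 / 2) * (ν + 2*γ)) / (4 * Real.sqrt (2*π) * γ)

noncomputable def I21 (γ ν : ℝ) : ℝ :=
  -(1/2) * (ν - γ) * (erf ((ν - 2*γ) / Real.sqrt 2) + 1)
    - Real.exp (-(ν - 2*γ)^2 / 2) / Real.sqrt (2*π)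

/-!
On each of the three regions `h + ν ≤ -2γ`, `|h + ν| ≤ 2γ`, `h + ν > 2γ` the integrand is a
polynomial of degree at most two in `h`, so the expectation is a sum of three truncated Gaussian
moments. These have closed forms: `(p x² + q x + r) e^{-x²/2}` is the derivative of
`-(p x + q) e^{-x²/2}` plus `(p + r) e^{-x²/2}`, and the integral of `e^{-x²/2}` over an interval or
a half-line is an `erf` term.
-/

open Set Topology

lemma erf_neg (x : ℝ) : erf (-x) = -erf x := by
  have h := intervalIntegral.integral_comp_neg (a := 0) (b := x) fun t => exp (-t ^ 2)
  simp only [neg_sq, neg_zero] at h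
  rw [erf, erf, intervalIntegral.integral_symm, ← h]
  ring

lemma integral_exp_neg_sq_div_two (a b : ℝ) :
    ∫ x in a..b, exp (-x ^ 2 / 2) = √(2 * π) / 2 * (erf (b / √2) - erf (a / √2)) := by
  have hsubst : ∀ x : ℝ, exp (-x ^ 2 / 2) = exp (-(x / √2) ^ 2) := fun x => by
    rw [div_pow, sq_sqrt zero_le_two]
    ring_nf
  have hint : ∀ c d : ℝ, IntervalIntegrable (fun t => exp (-t ^ 2)) volume c d := fun c d =>
    (by fun_prop : Continuous fun t : ℝ => exp (-t ^ 2)).intervalIntegrable c d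
  simp_rw [hsubst]
  rw [intervalIntegral.integral_comp_div (fun t => exp (-t ^ 2)) (by positivity), erf, erf,
    ← intervalIntegral.integral_interval_sub_left (hint 0 _) (hint 0 _), sqrt_mul zero_le_two,
    smul_eq_mul]
  field_simp

lemma integrable_exp_neg_sq_div_two : Integrable fun x : ℝ => exp (-x ^ 2 / 2) := by
  convert integrable_exp_neg_mul_sq (b := 1 / 2) (by norm_num) using 3
  ring

lemma integrable_mul_exp_neg_sq_div_two : Integrable fun x : ℝ => x * exp (-x ^ 2 / 2) := by
  convert integrable_mul_exp_neg_mul_sq (b := 1 / 2) (by norm_num) using 4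
  ring

lemma integrable_affine_mul_exp_neg_sq_div_two (p q : ℝ) :
    Integrable fun x : ℝ => (p * x + q) * exp (-x ^ 2 / 2) := by
  refine ((integrable_mul_exp_neg_sq_div_two.const_mul p).add
    (integrable_exp_neg_sq_div_two.const_mul q)).congr (.of_forall fun x => ?_)
  simp only [Pi.add_apply]
  ring

lemma hasDerivAt_exp_neg_sq_div_two (x : ℝ) :
    HasDerivAt (fun x => exp (-x ^ 2 / 2)) (-x * exp (-x ^ 2 / 2)) x :=
  ((hasDerivAt_pow 2 x).neg.div_const 2).exp.congr_deriv
    (by simp only [Pi.neg_apply, Nat.cast_ofNat]; ring)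

lemma tendsto_exp_neg_sq_div_two_atTop : Tendsto (fun x : ℝ => exp (-x ^ 2 / 2)) atTop (𝓝 0) :=
  tendsto_exp_atBot.comp <| by
    simpa only [neg_div, Function.comp_def] using
      tendsto_neg_atTop_atBot.comp ((tendsto_pow_atTop two_ne_zero).atTop_div_const two_pos)

lemma integral_Ioi_exp_neg_sq_div_two (a : ℝ) :
    ∫ x in Ioi a, exp (-x ^ 2 / 2) = √(2 * π) / 2 * (1 - erf (a / √2)) := by
  have hhalf : ∫ x in Ioi (0 : ℝ), exp (-x ^ 2 / 2) = √(2 * π) / 2 := by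
    convert integral_gaussian_Ioi (1 / 2) using 4
    · ring
    · field_simp
  have h := intervalIntegral.integral_Ioi_sub_Ioi' (a := 0) (b := a)
    integrable_exp_neg_sq_div_two.integrableOn integrable_exp_neg_sq_div_two.integrableOn
  have herf_zero : erf 0 = 0 := by simp [erf]
  rw [hhalf, integral_exp_neg_sq_div_two, zero_div, herf_zero] at h
  linarith

lemma integral_Ioi_affine_mul_exp_neg_sq_div_two (p q a : ℝ) :
    ∫ x in Ioi a, (p * x + q) * exp (-x ^ 2 / 2)
      = p * exp (-a ^ 2 / 2) + q * (√(2 * π) / 2 * (1 - erf (a / √2))) := by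
  have hderiv : ∀ x ∈ Ici a,
      HasDerivAt (fun x => -exp (-x ^ 2 / 2)) (x * exp (-x ^ 2 / 2)) x :=
    fun x _ => (hasDerivAt_exp_neg_sq_div_two x).neg.congr_deriv (by ring)
  have hlimit : Tendsto (fun x => -exp (-x ^ 2 / 2)) atTop (𝓝 0) := by
    simpa using tendsto_exp_neg_sq_div_two_atTop.neg
  have hsplit : (fun x => (p * x + q) * exp (-x ^ 2 / 2))
      = fun x => p * (x * exp (-x ^ 2 / 2)) + q * exp (-x ^ 2 / 2) := by
    ext x
    ring
  rw [hsplit, integral_add (integrable_mul_exp_neg_sq_div_two.const_mul p).integrableOn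
      (integrable_exp_neg_sq_div_two.const_mul q).integrableOn,
    integral_const_mul, integral_const_mul, integral_Ioi_exp_neg_sq_div_two,
    integral_Ioi_of_hasDerivAt_of_tendsto' hderiv
      integrable_mul_exp_neg_sq_div_two.integrableOn hlimit]
  ring

lemma integral_Iic_affine_mul_exp_neg_sq_div_two (p q a : ℝ) :
    ∫ x in Iic a, (p * x + q) * exp (-x ^ 2 / 2)
      = -p * exp (-a ^ 2 / 2) + q * (√(2 * π) / 2 * (1 + erf (a / √2))) := by
  have h := integral_comp_neg_Ioi (-a) fun x => (p * x + q) * exp (-x ^ 2 / 2)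
  rw [neg_neg] at h
  rw [← h]
  convert integral_Ioi_affine_mul_exp_neg_sq_div_two (-p) q (-a) using 1
  · simp only [neg_sq, neg_mul_comm]
  · simp only [neg_sq, neg_div, erf_neg]
    ring

lemma integral_quadratic_mul_exp_neg_sq_div_two (p q r a b : ℝ) :
    ∫ x in a..b, (p * x ^ 2 + q * x + r) * exp (-x ^ 2 / 2)
      = (p * a + q) * exp (-a ^ 2 / 2) - (p * b + q) * exp (-b ^ 2 / 2)
        + (p + r) * (√(2 * π) / 2 * (erf (b / √2) - erf (a / √2))) := by
  have hderiv : ∀ x ∈ uIcc a b, HasDerivAt (fun x => -(p * x + q) * exp (-x ^ 2 / 2))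
      ((p * x ^ 2 + q * x - p) * exp (-x ^ 2 / 2)) x := fun x _ =>
    ((((hasDerivAt_id x).const_mul p).add_const q).neg.mul
      (hasDerivAt_exp_neg_sq_div_two x)).congr_deriv (by simp only [id, Pi.neg_apply]; ring)
  have hsplit : (fun x => (p * x ^ 2 + q * x + r) * exp (-x ^ 2 / 2))
      = fun x => (p * x ^ 2 + q * x - p) * exp (-x ^ 2 / 2) + (p + r) * exp (-x ^ 2 / 2) := by
    ext x
    ring
  have hint : ∀ g : ℝ → ℝ, Continuous g → IntervalIntegrable g volume a b :=
    fun g hg => hg.intervalIntegrable a b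
  rw [hsplit, intervalIntegral.integral_add (hint _ (by fun_prop)) (hint _ (by fun_prop)),
    intervalIntegral.integral_eq_sub_of_hasDerivAt hderiv (hint _ (by fun_prop)),
    intervalIntegral.integral_const_mul, integral_exp_neg_sq_div_two]
  ring

lemma integral_eq_of_eqOn_Iic_Ioc_Ioi {E : Type*} [NormedAddCommGroup E] [NormedSpace ℝ E]
    {f gL gM gR : ℝ → E} {a b : ℝ} (hab : a ≤ b)
    (hL : EqOn f gL (Iic a)) (hM : EqOn f gM (Ioc a b)) (hR : EqOn f gR (Ioi b))
    (hgL : IntegrableOn gL (Iic a)) (hgM : IntegrableOn gM (Ioc a b))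
    (hgR : IntegrableOn gR (Ioi b)) :
    ∫ x, f x = (∫ x in Iic a, gL x) + (∫ x in a..b, gM x) + ∫ x in Ioi b, gR x := by
  have hfM := hgM.congr_fun hM.symm measurableSet_Ioc
  have hfR := hgR.congr_fun hR.symm measurableSet_Ioi
  rw [← intervalIntegral.integral_Iic_add_Ioi (hgL.congr_fun hL.symm measurableSet_Iic)
      (Ioc_union_Ioi_eq_Ioi hab ▸ hfM.union hfR),
    ← intervalIntegral.integral_interval_add_Ioi'
      ((intervalIntegrable_iff_integrableOn_Ioc_of_le hab).2 hfM) hfR,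
    intervalIntegral.integral_of_le hab, intervalIntegral.integral_of_le hab,
    setIntegral_congr_fun measurableSet_Iic hL, setIntegral_congr_fun measurableSet_Ioc hM,
    setIntegral_congr_fun measurableSet_Ioi hR, add_assoc]

lemma integral_gaussianReal_zero_one (f : ℝ → ℝ) :
    ∫ x, f x ∂gaussianReal 0 1 = (√(2 * π))⁻¹ * ∫ x, f x * exp (-x ^ 2 / 2) := by
  rw [integral_gaussianReal_eq_integral_smul one_ne_zero, ← integral_const_mul]
  congr 1 with x
  simp only [gaussianPDFReal, NNReal.coe_one, mul_one, sub_zero, smul_eq_mul]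
  ring

/-- For `γ > 0`, `boxMin γ x = min_{t ∈ [-1, 1]} (x t + γ t²)`. -/
noncomputable def boxMin (γ x : ℝ) : ℝ :=
  if |x| ≤ 2 * γ then -(x ^ 2 / (4 * γ)) else -|x| + γ

lemma boxMin_of_le_neg {γ x : ℝ} (hγ : 0 < γ) (hx : x ≤ -(2 * γ)) : boxMin γ x = x + γ := by
  unfold boxMin
  split_ifs with hcase
  · obtain rfl : x = -(2 * γ) := le_antisymm hx (abs_le.mp hcase).1
    field_simp
    ring
  · rw [abs_of_neg (by linarith)]
    ring

lemma boxMin_of_abs_le {γ x : ℝ} (hx : |x| ≤ 2 * γ) : boxMin γ x = -(x ^ 2 / (4 * γ)) :=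
  if_pos hx

lemma boxMin_of_lt {γ x : ℝ} (hγ : 0 ≤ γ) (hx : 2 * γ < x) : boxMin γ x = -x + γ := by
  rw [boxMin, abs_of_pos (by linarith), if_neg hx.not_ge]

/-- the Gaussian expectation of the box-constrained per-coordinate optimum
`f(h) = min_{t∈[-1,1]} ((h+ν)t + γt²)` equals `I22 - I1 + I21`. -/
theorem gaussian_expectation_fbox (γ ν : ℝ) (hγ : 0 < γ) :
    (∫ h : ℝ, (if |h + ν| ≤ 2*γ then -((h + ν)^2 / (4*γ)) else -|h + ν| + γ)
      ∂(gaussianReal 0 1)) = I22 γ ν - I1 γ ν + I21 γ ν := by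
  change ∫ h, boxMin γ (h + ν) ∂gaussianReal 0 1 = _
  have hL : EqOn (fun h => boxMin γ (h + ν) * exp (-h ^ 2 / 2))
      (fun h => (1 * h + (ν + γ)) * exp (-h ^ 2 / 2)) (Iic (-(ν + 2 * γ))) := fun h hh => by
    simp only [boxMin_of_le_neg hγ (show h + ν ≤ -(2 * γ) by linarith [mem_Iic.mp hh])]
    ring
  have hM : EqOn (fun h => boxMin γ (h + ν) * exp (-h ^ 2 / 2))
      (fun h => (-(1 / (4 * γ)) * h ^ 2 + -(ν / (2 * γ)) * h + -(ν ^ 2 / (4 * γ)))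
        * exp (-h ^ 2 / 2)) (Ioc (-(ν + 2 * γ)) (2 * γ - ν)) := fun h ⟨h₁, h₂⟩ => by
    simp only [boxMin_of_abs_le (abs_le.mpr ⟨by linarith, by linarith⟩ : |h + ν| ≤ 2 * γ)]
    field_simp
    ring
  have hR : EqOn (fun h => boxMin γ (h + ν) * exp (-h ^ 2 / 2))
      (fun h => (-1 * h + (γ - ν)) * exp (-h ^ 2 / 2)) (Ioi (2 * γ - ν)) := fun h hh => by
    simp only [boxMin_of_lt hγ.le (show 2 * γ < h + ν by linarith [mem_Ioi.mp hh])]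
    ring
  have hsqrt : √(π / 2) = √(2 * π) / 2 := by
    rw [show π / 2 = 2 * π / 2 ^ 2 by ring, sqrt_div' _ (by positivity), sqrt_sq zero_le_two]
  rw [integral_gaussianReal_zero_one, integral_eq_of_eqOn_Iic_Ioc_Ioi (by linarith) hL hM hR
      (integrable_affine_mul_exp_neg_sq_div_two _ _).integrableOn
      (Continuous.integrableOn_Ioc (by fun_prop))
      (integrable_affine_mul_exp_neg_sq_div_two _ _).integrableOn,
    integral_Iic_affine_mul_exp_neg_sq_div_two, integral_quadratic_mul_exp_neg_sq_div_two,
    integral_Ioi_affine_mul_exp_neg_sq_div_two, I22, I1, I21, erfc,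
    hsqrt, show ν - 2 * γ = -(2 * γ - ν) by ring, show 2 * γ + ν = ν + 2 * γ by ring]
  simp only [neg_sq, neg_div, erf_neg]
  field_simp
  ring
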